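/- Let A be a self-adjoint operator with domain D(A) on a Hilbert space H, and let U and V be unitary operators on H of class C¹(A) with commutators B_U = ad_A U and B_V = ad_A V. Suppose that U*V − I is compact and that the bounded operator −B_U*V + U*B_V (which equals ad_A(U*V)) is compact. Then U*B_U − V*B_V is compact, i.e. (U*AU − A)° − (V*AV − A)° is compact. -/

import Mathlib

/-!
The form `⟨Uφ, A Uψ⟩ - ⟨φ, Aψ⟩` is hermitian because `A` is symmetric and `U` preserves `D(A)`,
so `S := U* B_U` is self-adjoint, i.e. `B_U* = S U*`. With `W := U*V` this turns the compact
operator `ad_A(U*V) = -B_U* V + U* B_V` into `U* B_V - S W`, whence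
`S - V* B_V = (S - W* S W) - W* ad_A(U*V)`. Finally `S - W* S W` is compact because `W ≡ 1`
modulo compact operators and `W* W = 1`.
-/

section

open scoped InnerProductSpace

variable {𝕜 H : Type*} [RCLike 𝕜] [NormedAddCommGroup H] [InnerProductSpace 𝕜 H]

theorem ContinuousLinearMap.isSelfAdjoint_of_dense [CompleteSpace H] {D : Submodule 𝕜 H}
    (hD : Dense (D : Set H)) {T : H →L[𝕜] H}
    (hT : ∀ x y : D, ⟪T x, y⟫_𝕜 = ⟪(x : H), T y⟫_𝕜) : IsSelfAdjoint T := by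
  refine ContinuousLinearMap.ext_on (s := D) (by rwa [Submodule.span_eq]) fun y hy => ?_
  refine hD.eq_of_inner_right 𝕜 fun x hx => ?_
  rw [ContinuousLinearMap.star_eq_adjoint, ContinuousLinearMap.adjoint_inner_right,
    hT ⟨x, hx⟩ ⟨y, hy⟩]

theorem isCompactOperator_mul_mul_sub_self {𝕜 E : Type*} [NontriviallyNormedField 𝕜]
    [NormedAddCommGroup E] [NormedSpace 𝕜 E] {L W : E →L[𝕜] E} (T : E →L[𝕜] E)
    (hLW : L * W = 1) (hW : IsCompactOperator ⇑(W - 1)) :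
    IsCompactOperator ⇑(L * T * W - T) := by
  have h : L * T * W - T = L * T * (W - 1) - L * (W - 1) * T := by
    rw [mul_sub, mul_sub, sub_mul, hLW]; noncomm_ring
  rw [h]
  exact (hW.continuous_comp (L * T).continuous).sub
    ((hW.comp_clm T).continuous_comp L.continuous)

namespace LinearPMap

/-- `U` is of class `C¹(A)` with `ad_A U = B`. -/
def HasCommutator (A : H →ₗ.[𝕜] H) (U B : H →L[𝕜] H) : Prop :=
  ∀ φ ψ : A.domain, ⟪A φ, U ψ⟫_𝕜 - ⟪(φ : H), U (A ψ)⟫_𝕜 = ⟪(φ : H), B ψ⟫_𝕜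

variable [CompleteSpace H] {A : H →ₗ.[𝕜] H} {U B : H →L[𝕜] H}

theorem HasCommutator.exists_adjoint_apply (hA : Dense (A.domain : Set H))
    (h : A.HasCommutator U B) (ψ : A.domain) :
    ∃ hψ : U ψ ∈ A†.domain, A† ⟨U ψ, hψ⟩ = U (A ψ) + B ψ := by
  have hw : ∀ φ : A.domain, ⟪U (A ψ) + B ψ, (φ : H)⟫_𝕜 = ⟪U ψ, A φ⟫_𝕜 := fun φ => by
    rw [← inner_conj_symm, inner_add_right, ← h φ ψ, add_sub_cancel, inner_conj_symm]
  exact ⟨mem_adjoint_domain_of_exists _ ⟨_, hw⟩, adjoint_apply_eq hA _ hw⟩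

theorem HasCommutator.exists_apply (hA : IsSelfAdjoint A) (h : A.HasCommutator U B)
    (ψ : A.domain) : ∃ hψ : U ψ ∈ A.domain, A ⟨U ψ, hψ⟩ = U (A ψ) + B ψ := by
  have := h.exists_adjoint_apply hA.dense_domain ψ
  rwa [isSelfAdjoint_def.mp hA] at this

theorem _root_.IsSelfAdjoint.isFormalAdjoint (hA : IsSelfAdjoint A) : A.IsFormalAdjoint A := by
  have := adjoint_isFormalAdjoint hA.dense_domain
  rwa [isSelfAdjoint_def.mp hA] at this

theorem HasCommutator.isSelfAdjoint_star_mul (hA : IsSelfAdjoint A) (hU : star U * U = 1)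
    (h : A.HasCommutator U B) : IsSelfAdjoint (star U * B) := by
  have hiso : ∀ x y : H, ⟪U x, U y⟫_𝕜 = ⟪x, y⟫_𝕜 := fun x y => by
    rw [← ContinuousLinearMap.adjoint_inner_right, ← ContinuousLinearMap.star_eq_adjoint,
      ← mul_apply_eq_comp, hU, one_apply_eq_self]
  have hform : ∀ φ ψ : A.domain, ∀ hψ : U ψ ∈ A.domain, A ⟨U ψ, hψ⟩ = U (A ψ) + B ψ →
      ⟪(φ : H), (star U * B) ψ⟫_𝕜 = ⟪U φ, A ⟨U ψ, hψ⟩⟫_𝕜 - ⟪(φ : H), A ψ⟫_𝕜 := by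
    intro φ ψ hψ hAψ
    rw [hAψ, inner_add_right, hiso, mul_apply_eq_comp,
      ContinuousLinearMap.star_eq_adjoint, ContinuousLinearMap.adjoint_inner_right]
    ring
  refine ContinuousLinearMap.isSelfAdjoint_of_dense hA.dense_domain fun φ ψ => ?_
  obtain ⟨hUφ, hAφ⟩ := h.exists_apply hA φ
  obtain ⟨hUψ, hAψ⟩ := h.exists_apply hA ψ
  rw [← inner_conj_symm, hform _ _ _ hAφ, hform _ _ _ hAψ, _root_.map_sub,
    inner_conj_symm, inner_conj_symm]
  exact congrArg₂ (· - ·) (hA.isFormalAdjoint ⟨_, hUφ⟩ ⟨_, hUψ⟩) (hA.isFormalAdjoint φ ψ)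

end LinearPMap

end

open scoped ComplexInnerProductSpace

theorem stmt13_general
    {H : Type*} [NormedAddCommGroup H] [InnerProductSpace ℂ H] [CompleteSpace H]
    -- A self-adjoint (densely defined) operator on H
    (A : H →ₗ.[ℂ] H) (hsa : A.adjoint = A)
    -- unitary operators U and V of class C¹(A) with commutators BU, BV
    (U V BU BV : H →L[ℂ] H)
    (hU : U ∈ unitary (H →L[ℂ] H)) (hV : V ∈ unitary (H →L[ℂ] H))
    (hCU : ∀ φ ψ : A.domain,
      ⟪A φ, U (ψ : H)⟫ - ⟪(φ : H), U (A ψ)⟫ = ⟪(φ : H), BU (ψ : H)⟫)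
    -- U*V − I is compact
    (hUV : IsCompactOperator ⇑(star U * V - 1))
    -- ad_A (U*V) = −B_U* V + U* B_V is compact
    (hcomp : IsCompactOperator ⇑(-(star BU) * V + star U * BV)) :
    IsCompactOperator ⇑(star U * BU - star V * BV) := by
  obtain ⟨hU₁, hU₂⟩ := Unitary.mem_iff.mp hU
  set S := star U * BU
  set W := star U * V
  have hS : IsSelfAdjoint S := LinearPMap.HasCommutator.isSelfAdjoint_star_mul hsa hU₁ hCU
  have hBU : star BU = S * star U := by
    rw [← hS.star_eq, star_mul, star_star, mul_assoc, hU₂, mul_one]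
  have hW : star W * W = 1 := by
    rw [star_mul, star_star, mul_assoc, ← mul_assoc U, hU₂, one_mul, (Unitary.mem_iff.mp hV).1]
  have hVBV : star V * BV = star W * (S * W + (-(star BU) * V + star U * BV)) := by
    calc star V * BV = star V * (U * star U) * BV := by rw [hU₂, mul_one]
      _ = star W * (star U * BV) := by simp only [W, star_mul, star_star, mul_assoc]
      _ = star W * (S * W + (-(star BU) * V + star U * BV)) := by
        rw [hBU]; simp only [W]; noncomm_ring
  have hsplit : S - star V * BV =
      -(star W * S * W - S) - star W * (-(star BU) * V + star U * BV) := by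
    rw [hVBV]; noncomm_ring
  rw [hsplit]
  exact (isCompactOperator_mul_mul_sub_self S hW hUV).neg.sub
    (hcomp.continuous_comp (star W).continuous)

/-- Second part of Lemma 4.8 ("prop-compact"): for unitaries `U, V ∈ C¹(A)` with
commutators `B_U = ad_A U`, `B_V = ad_A V`, if `U*V − I` is compact and
`ad_A(U*V) = −B_U* V + U* B_V` is compact, then
`(U*AU − A)° − (V*AV − A)° = U* B_U − V* B_V` is compact. -/
theorem stmt13
    {H : Type*} [NormedAddCommGroup H] [InnerProductSpace ℂ H] [CompleteSpace H]
    -- A self-adjoint (densely defined) operator on H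
    (A : H →ₗ.[ℂ] H) (hdense : Dense (A.domain : Set H)) (hsa : A.adjoint = A)
    -- unitary operators U and V of class C¹(A) with commutators BU, BV
    (U V BU BV : H →L[ℂ] H)
    (hU : U ∈ unitary (H →L[ℂ] H)) (hV : V ∈ unitary (H →L[ℂ] H))
    (hCU : ∀ φ ψ : A.domain,
      ⟪A φ, U (ψ : H)⟫ - ⟪(φ : H), U (A ψ)⟫ = ⟪(φ : H), BU (ψ : H)⟫)
    (hCV : ∀ φ ψ : A.domain,
      ⟪A φ, V (ψ : H)⟫ - ⟪(φ : H), V (A ψ)⟫ = ⟪(φ : H), BV (ψ : H)⟫)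
    -- U*V − I is compact
    (hUV : IsCompactOperator ⇑(star U * V - 1))
    -- ad_A (U*V) = −B_U* V + U* B_V is compact
    (hcomp : IsCompactOperator ⇑(-(star BU) * V + star U * BV)) :
    IsCompactOperator ⇑(star U * BU - star V * BV) :=
  stmt13_general A hsa U V BU BV hU hV hCU hUV hcomp
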